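/- Let Γ = ⟨S | R⟩ be a finitely presented sofic group with a generator τ ∈ S that is a central nontrivial involution in Γ. Then Γ has a sofic approximation ψ_n : S → Sym((Ω_n)±) such that ψ_n(τ) = −Id (the sign flip on (Ω_n)± = {±}×Ω_n) for all n, and every permutation in the image of ψ_n commutes with the sign flip. -/

import Mathlib

/-- Plain normalized Hamming distance on `Sym(γ)` for a finite type `γ`. -/
noncomputable def dHp {γ : Type*} [Fintype γ] [DecidableEq γ] (a b : Equiv.Perm γ) : ℝ :=
  ((Finset.univ.filter fun x : γ => a x ≠ b x).card : ℝ) / Fintype.card γ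

/-- The sign flip `-Id` on `Ω± = {+,−} × Ω` (signs modeled by `Bool`). -/
def negId (Ω : Type*) : Equiv.Perm (Bool × Ω) :=
  Function.Involutive.toPerm (fun p => (!p.1, p.2)) (fun p => by simp)

/-- A sofic approximation of the finitely presented group `⟨S | R⟩`: a sequence of
almost actions whose defects tend to `0` and which separate every word not in the
normal closure of `R` from the identity (distance tending to `1`). -/
def IsSoficApprox {S : Type*} [DecidableEq S] (R : Finset (FreeGroup S))
    {Ω : ℕ → Type} [∀ n, Fintype (Ω n)] [∀ n, DecidableEq (Ω n)]
    (φ : ∀ n, S → Equiv.Perm (Ω n)) : Prop :=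
  (∀ r ∈ R, Filter.Tendsto (fun n => dHp (FreeGroup.lift (φ n) r) 1)
      Filter.atTop (nhds 0)) ∧
  ∀ w : FreeGroup S, w ∉ Subgroup.normalClosure (R : Set (FreeGroup S)) →
    Filter.Tendsto (fun n => dHp (FreeGroup.lift (φ n) w) 1) Filter.atTop (nhds 1)

/-!
Double the given approximation `φₙ` to `{±} × Ωₙ`. Since `τ` is a nontrivial involution,
`φₙ(τ)` is a fixed-point-free involution off a vanishing proportion of points; swapping
`(±, x)` at the remaining points gives a fixed-point-free involution of `{±} × Ωₙ`, hence a
conjugate of `-Id`. After conjugating, `τ` acts almost as `-Id`, and since `τ` is central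
every generator almost commutes with `-Id`, so it can be changed on a vanishing proportion of
points into a permutation commuting with `-Id`. Generators changed on vanishing proportions of
points still form a sofic approximation, because the Hamming distance is bi-invariant.
-/

open Finset Filter Topology Equiv
open scoped commutatorElement

lemma Set.InjOn.exists_perm_eqOn {α : Type*} [Fintype α] {s : Set α} {f : α → α}
    (hf : s.InjOn f) : ∃ g : Perm α, ∀ x ∈ s, g x = f x := by
  obtain ⟨g, hg⟩ := Set.MapsTo.exists_equiv_extend_of_card_eq (t := Finset.univ)
    Finset.card_univ.symm (fun x _ => by simp) hf
  exact ⟨g.trans (Equiv.subtypeUnivEquiv Finset.mem_univ), hg⟩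

section Hamming

variable {α : Type*} [Fintype α] [DecidableEq α]

lemma dHp_eq_dens (a b : Perm α) : dHp a b = ((univ.filter fun x => a x ≠ b x).dens : ℝ) := by
  simp [dHp, Finset.dens]

lemma dHp_nonneg (a b : Perm α) : 0 ≤ dHp a b := by
  rw [dHp_eq_dens]; positivity

lemma dHp_le_one (a b : Perm α) : dHp a b ≤ 1 := by
  rw [dHp_eq_dens]; exact_mod_cast dens_le_one

@[simp] lemma dHp_self (a : Perm α) : dHp a a = 0 := by
  simp [dHp]

lemma dHp_comm (a b : Perm α) : dHp a b = dHp b a := by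
  simp only [dHp, ne_comm]

lemma dHp_le_add_of_imp {a b c d e f : Perm α}
    (h : ∀ x, a x ≠ b x → c x ≠ d x ∨ e x ≠ f x) : dHp a b ≤ dHp c d + dHp e f := by
  simp only [dHp_eq_dens]
  rw [← NNRat.cast_add, NNRat.cast_le]
  refine (dens_le_dens fun x hx => ?_).trans (dens_union_le _ _)
  simpa using h x (by simpa using hx)

lemma dHp_le_of_imp {a b c d : Perm α} (h : ∀ x, a x ≠ b x → c x ≠ d x) :
    dHp a b ≤ dHp c d := by
  simpa using dHp_le_add_of_imp (e := 1) (f := 1) fun x hx => Or.inl (h x hx)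

lemma dHp_le_add_one_sub_of_imp {a b c d e f : Perm α}
    (h : ∀ x, a x ≠ b x → c x ≠ d x ∨ e x = f x) :
    dHp a b ≤ dHp c d + (1 - dHp e f) := by
  have hsplit := dens_filter_add_dens_filter_not_eq_dens (s := univ) fun x => e x = f x
  have hcover : (univ.filter fun x => a x ≠ b x).dens ≤
      (univ.filter fun x => c x ≠ d x).dens + (univ.filter fun x => e x = f x).dens := by
    refine (dens_le_dens fun x hx => ?_).trans (dens_union_le _ _)
    simpa using h x (by simpa using hx)
  have hone : (univ.filter fun x => e x = f x).dens +
      (univ.filter fun x => e x ≠ f x).dens ≤ 1 := hsplit ▸ dens_le_one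
  simp only [dHp_eq_dens]
  have hcover' : _ ≤ _ := NNRat.cast_le (K := ℝ) |>.2 hcover
  have hone' : _ ≤ _ := NNRat.cast_le (K := ℝ) |>.2 hone
  rw [NNRat.cast_add] at hcover' hone'
  rw [NNRat.cast_one] at hone'
  linarith

lemma dHp_triangle (a b c : Perm α) : dHp a c ≤ dHp a b + dHp b c :=
  dHp_le_add_of_imp fun x hac => by
    by_contra! h
    exact hac (h.1.trans h.2)

lemma dHp_mul_left (c a b : Perm α) : dHp (c * a) (c * b) = dHp a b := by
  simp [dHp]

lemma dHp_mul_right (a b c : Perm α) : dHp (a * c) (b * c) = dHp a b := by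
  unfold dHp
  congr 2
  refine card_bij' (fun x _ => c x) (fun x _ => c.symm x) ?_ ?_ (by simp) (by simp)
  · intro x hx
    rw [mem_filter] at hx
    simpa using hx.2
  · intro x hx
    rw [mem_filter] at hx ⊢
    simpa using hx.2

lemma dHp_inv (a b : Perm α) : dHp a⁻¹ b⁻¹ = dHp a b := by
  rw [← dHp_mul_left a, ← dHp_mul_right _ _ b, dHp_comm]
  group

lemma dHp_inv_one (a : Perm α) : dHp a⁻¹ 1 = dHp a 1 := by
  simpa using dHp_inv a 1

lemma dHp_mul_mul_le (a b c d : Perm α) : dHp (a * b) (c * d) ≤ dHp a c + dHp b d := by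
  calc dHp (a * b) (c * d) ≤ dHp (a * b) (a * d) + dHp (a * d) (c * d) := dHp_triangle _ _ _
    _ = dHp a c + dHp b d := by rw [dHp_mul_left, dHp_mul_right, add_comm]

lemma dHp_conj (e a b : Perm α) : dHp (e * a * e⁻¹) (e * b * e⁻¹) = dHp a b := by
  rw [dHp_mul_right, dHp_mul_left]

lemma dHp_conj_one (e a : Perm α) : dHp (e * a * e⁻¹) 1 = dHp a 1 := by
  simpa using dHp_conj e a 1

lemma dHp_commutatorElement (a b : Perm α) :
    dHp ⁅a, b⁆ 1 = dHp (a * b) (b * a) := by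
  rw [← dHp_mul_right _ _ (b * a), commutatorElement_def]
  group

lemma dHp_mul_comm_le (a b ν : Perm α) :
    dHp (a * ν) (ν * a) ≤ dHp ⁅a, b⁆ 1 + 2 * dHp b ν := by
  have h₁ := dHp_triangle (a * ν) (a * b) (ν * a)
  have h₂ := dHp_triangle (a * b) (b * a) (ν * a)
  rw [dHp_mul_left, dHp_comm ν] at h₁
  rw [dHp_mul_right] at h₂
  rw [dHp_commutatorElement]
  linarith

@[simps]
def doubleHom (α : Type*) : Perm α →* Perm (Bool × α) where
  toFun t := prodCongr (Equiv.refl Bool) t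
  map_one' := by ext <;> rfl
  map_mul' _ _ := by ext <;> rfl

lemma dHp_doubleHom (a b : Perm α) : dHp (doubleHom α a) (doubleHom α b) = dHp a b := by
  have : (univ.filter fun p : Bool × α => doubleHom α a p ≠ doubleHom α b p) =
      univ ×ˢ univ.filter fun x => a x ≠ b x := by
    ext ⟨c, x⟩; simp [Prod.ext_iff]
  simp only [dHp, this, card_product, Fintype.card_prod, card_univ, Fintype.card_bool]
  push_cast
  exact mul_div_mul_left _ _ two_ne_zero

lemma dHp_doubleHom_one (a : Perm α) : dHp (doubleHom α a) 1 = dHp a 1 := by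
  rw [← map_one (doubleHom α), dHp_doubleHom]

end Hamming

section Words

variable {S : Type} {Ω Ω' : ℕ → Type} [∀ n, Fintype (Ω n)] [∀ n, DecidableEq (Ω n)]
  [∀ n, Fintype (Ω' n)] [∀ n, DecidableEq (Ω' n)]

lemma tendsto_dHp_lift_of_tendsto_dHp {φ ψ : ∀ n, S → Perm (Ω n)}
    (h : ∀ s, Tendsto (fun n => dHp (ψ n s) (φ n s)) atTop (𝓝 0)) (w : FreeGroup S) :
    Tendsto (fun n => dHp (FreeGroup.lift (ψ n) w) (FreeGroup.lift (φ n) w)) atTop (𝓝 0) := by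
  induction w using FreeGroup.induction_on with
  | C1 => simp
  | of s => simpa using h s
  | inv_of s ih => simpa only [map_inv, dHp_inv] using ih
  | mul v w hv hw =>
    refine squeeze_zero (fun n => dHp_nonneg _ _) (fun n => ?_) (by simpa using hv.add hw)
    simpa only [map_mul] using dHp_mul_mul_le _ _ _ _

variable [DecidableEq S] {R : Finset (FreeGroup S)}

lemma IsSoficApprox.of_tendsto_dHp {φ ψ : ∀ n, S → Perm (Ω n)} (hφ : IsSoficApprox R φ)
    (h : ∀ s, Tendsto (fun n => dHp (ψ n s) (φ n s)) atTop (𝓝 0)) : IsSoficApprox R ψ := by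
  have hw := tendsto_dHp_lift_of_tendsto_dHp h
  refine ⟨fun r hr => ?_, fun w hw' => ?_⟩
  · exact squeeze_zero (fun n => dHp_nonneg _ _) (fun n => dHp_triangle _ _ _)
      (by simpa using (hw r).add (hφ.1 r hr))
  · refine tendsto_of_tendsto_of_tendsto_of_le_of_le (by simpa using (hφ.2 w hw').sub (hw w))
      tendsto_const_nhds (fun n => ?_) (fun n => dHp_le_one _ _)
    have := dHp_triangle (FreeGroup.lift (φ n) w) (FreeGroup.lift (ψ n) w) 1
    rw [dHp_comm _ (FreeGroup.lift (ψ n) w)] at this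
    linarith

lemma IsSoficApprox.map {φ : ∀ n, S → Perm (Ω n)} (hφ : IsSoficApprox R φ)
    (f : ∀ n, Perm (Ω n) →* Perm (Ω' n)) (hf : ∀ n a, dHp (f n a) 1 = dHp a 1) :
    IsSoficApprox R (fun n s => f n (φ n s)) := by
  have hlift : ∀ n w, FreeGroup.lift (fun s => f n (φ n s)) w = f n (FreeGroup.lift (φ n) w) :=
    fun n w => DFunLike.congr_fun (FreeGroup.ext_hom (FreeGroup.lift fun s => f n (φ n s))
      ((f n).comp (FreeGroup.lift (φ n))) (by simp)) w
  simp only [IsSoficApprox, hlift, hf]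
  exact hφ

def asymptoticKernel (φ : ∀ n, S → Perm (Ω n)) : Subgroup (FreeGroup S) where
  carrier := {w | Tendsto (fun n => dHp (FreeGroup.lift (φ n) w) 1) atTop (𝓝 0)}
  one_mem' := by simp
  mul_mem' {v w} hv hw := by
    refine squeeze_zero (fun n => dHp_nonneg _ _) (fun n => ?_) (by simpa using hv.add hw)
    simpa only [map_mul, mul_one] using dHp_mul_mul_le _ _ (1 : Perm (Ω n)) 1
  inv_mem' {w} (hw : Tendsto _ _ _) := by
    show Tendsto _ _ _
    simpa only [map_inv, dHp_inv_one] using hw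

instance (φ : ∀ n, S → Perm (Ω n)) : (asymptoticKernel φ).Normal where
  conj_mem w (hw : Tendsto _ _ _) g := by
    show Tendsto _ _ _
    simpa only [map_mul, map_inv, dHp_conj_one] using hw

lemma IsSoficApprox.tendsto_of_mem_normalClosure {φ : ∀ n, S → Perm (Ω n)}
    (hφ : IsSoficApprox R φ) {w : FreeGroup S}
    (hw : w ∈ Subgroup.normalClosure (R : Set (FreeGroup S))) :
    Tendsto (fun n => dHp (FreeGroup.lift (φ n) w) 1) atTop (𝓝 0) :=
  Subgroup.normalClosure_le_normal (N := asymptoticKernel φ) (fun r hr => hφ.1 r hr) hw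

end Words

section NegId

variable {α : Type*}

@[simp] lemma negId_apply (p : Bool × α) : negId α p = (!p.1, p.2) := rfl

lemma negId_sq : negId α ^ 2 = 1 := by
  ext ⟨c, x⟩ <;> simp [sq]

lemma negId_apply_ne (p : Bool × α) : negId α p ≠ p := by
  simp [Prod.ext_iff]

def signTwist (β : α → Bool) (q : Perm α) : Perm (Bool × α) where
  toFun p := (xor (β p.2) p.1, q p.2)
  invFun p := (xor (β (q.symm p.2)) p.1, q.symm p.2)
  left_inv _ := by simp
  right_inv _ := by simp

lemma signTwist_commute_negId (β : α → Bool) (q : Perm α) :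
    Commute (signTwist β q) (negId α) := by
  ext ⟨c, y⟩ <;> simp [signTwist]

end NegId

section Involutions

variable {α : Type*} [Fintype α] [DecidableEq α]

lemma Equiv.Perm.cycleType_eq_replicate_two {σ : Perm α} (h2 : σ ^ 2 = 1)
    (hσ : ∀ x, σ x ≠ x) : σ.cycleType = Multiset.replicate (Fintype.card α / 2) 2 := by
  have hrep : σ.cycleType = Multiset.replicate (Multiset.card σ.cycleType) 2 :=
    Multiset.eq_replicate_card.2 fun k hk => le_antisymm
      (Nat.le_of_dvd two_pos ((Perm.dvd_of_mem_cycleType hk).trans (orderOf_dvd_of_pow_eq_one h2)))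
      (Perm.two_le_of_mem_cycleType hk)
  have hsum := σ.sum_cycleType
  rw [Finset.eq_univ_of_forall fun x => Perm.mem_support.2 (hσ x), card_univ, hrep,
    Multiset.sum_replicate, smul_eq_mul] at hsum
  rw [hrep, ← hsum, Nat.mul_div_cancel _ two_pos]

lemma isConj_of_sq_eq_one_of_forall_apply_ne {σ σ' : Perm α} (h2 : σ ^ 2 = 1)
    (hσ : ∀ x, σ x ≠ x) (h2' : σ' ^ 2 = 1) (hσ' : ∀ x, σ' x ≠ x) : IsConj σ σ' := by
  rw [Perm.isConj_iff_cycleType_eq, Perm.cycleType_eq_replicate_two h2 hσ,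
    Perm.cycleType_eq_replicate_two h2' hσ']

lemma exists_involution_dHp_doubleHom_le (t : Perm α) :
    ∃ σ : Perm (Bool × α), σ ^ 2 = 1 ∧ (∀ p, σ p ≠ p) ∧
      dHp σ (doubleHom α t) ≤ dHp (t * t) 1 + (1 - dHp t 1) := by
  let good (x : α) : Prop := t (t x) = x ∧ t x ≠ x
  have good_apply {x} (hx : good x) : good (t x) :=
    ⟨by rw [hx.1], by rw [hx.1]; exact hx.2.symm⟩
  let f (p : Bool × α) : Bool × α := if good p.2 then (p.1, t p.2) else (!p.1, p.2)
  have hf : Function.Involutive f := by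
    rintro ⟨c, x⟩
    by_cases hx : good x
    · simp [f, hx, good_apply hx, hx.1]
    · simp [f, hx]
  refine ⟨hf.toPerm f, Equiv.ext fun p => hf p, fun ⟨c, x⟩ => ?_, ?_⟩
  · by_cases hx : good x
    · simp [f, hx, hx.2]
    · simp [f, hx]
  · have := dHp_le_add_one_sub_of_imp (a := hf.toPerm f) (b := doubleHom α t)
      (c := doubleHom α (t * t)) (d := 1) (e := doubleHom α t) (f := 1) fun ⟨c, x⟩ hne => by
        by_cases hx : good x
        · simp [f, hx] at hne
        · simp only [good, not_and_or, not_not, ne_eq] at hx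
          simpa [Prod.ext_iff] using hx
    rwa [← map_one (doubleHom α), dHp_doubleHom, dHp_doubleHom] at this

lemma exists_conj_doubleHom_dHp_negId_le (t : Perm α) :
    ∃ e : Perm (Bool × α),
      dHp (e * doubleHom α t * e⁻¹) (negId α) ≤ dHp (t * t) 1 + (1 - dHp t 1) := by
  obtain ⟨σ, h2, hσ, hle⟩ := exists_involution_dHp_doubleHom_le t
  obtain ⟨e, he⟩ :=
    isConj_iff.1 (isConj_of_sq_eq_one_of_forall_apply_ne h2 hσ negId_sq negId_apply_ne)
  exact ⟨e, by rwa [← he, dHp_conj, dHp_comm]⟩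

lemma exists_commute_negId_dHp_le (p : Perm (Bool × α)) :
    ∃ p' : Perm (Bool × α), Commute p' (negId α) ∧
      dHp p' p ≤ dHp (p * negId α) (negId α * p) := by
  -- on `G`, `p` commutes with `-Id` and so induces an injective map of `α`
  let G : Set α := {y | p (true, y) = negId α (p (false, y))}
  have hinj : G.InjOn fun y => (p (false, y)).2 := by
    intro y hy y' hy' h
    by_cases h1 : (p (false, y)).1 = (p (false, y')).1
    · simpa using p.injective (Prod.ext h1 h)
    · have : p (true, y) = p (false, y') := by
        rw [show p (true, y) = _ from hy]
        ext
        · simpa [eq_comm, Bool.eq_not] using h1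
        · exact h
      simpa using p.injective this
  obtain ⟨q, hq⟩ := hinj.exists_perm_eqOn
  refine ⟨signTwist (fun y => (p (false, y)).1) q, signTwist_commute_negId _ _,
    dHp_le_of_imp fun ⟨c, y⟩ hne hcomm => hne ?_⟩
  have hy : y ∈ G := by
    cases c
    · exact hcomm
    · show p (true, y) = negId α (p (false, y))
      simpa [eq_comm] using congrArg (negId α) hcomm
  cases c
  · simp [signTwist, hq y hy]
  · simpa [signTwist, hq y hy] using hy.symm

end Involutions

theorem IsSoficApprox.exists_eq_negId_of_tendsto {S : Type} [DecidableEq S]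
    {R : Finset (FreeGroup S)} {Ω : ℕ → Type} [∀ n, Fintype (Ω n)] [∀ n, DecidableEq (Ω n)]
    {χ : ∀ n, S → Perm (Bool × Ω n)} (hχ : IsSoficApprox R χ) (τ : S)
    (hcomm : ∀ s : S, ⁅FreeGroup.of s, FreeGroup.of τ⁆ ∈
      Subgroup.normalClosure (R : Set (FreeGroup S)))
    (hτ : Tendsto (fun n => dHp (χ n τ) (negId (Ω n))) atTop (𝓝 0)) :
    ∃ ψ : ∀ n, S → Perm (Bool × Ω n),
      IsSoficApprox R ψ ∧ (∀ n, ψ n τ = negId (Ω n)) ∧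
        ∀ n s, Commute (ψ n s) (negId (Ω n)) := by
  choose sym hsym_comm hsym_le using fun n => exists_commute_negId_dHp_le (α := Ω n)
  refine ⟨fun n s => if s = τ then negId (Ω n) else sym n (χ n s),
    hχ.of_tendsto_dHp fun s => ?_, fun n => if_pos rfl, fun n s => ?_⟩
  · by_cases hs : s = τ
    · subst hs
      simpa [dHp_comm] using hτ
    have hsτ := hχ.tendsto_of_mem_normalClosure (hcomm s)
    simp only [map_commutatorElement, FreeGroup.lift_apply_of] at hsτ
    refine squeeze_zero (fun n => dHp_nonneg _ _)
      (fun n => ?_) (by simpa using hsτ.add (hτ.const_mul 2))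
    simp only [if_neg hs]
    exact (hsym_le n _).trans (dHp_mul_comm_le _ _ _)
  · dsimp only
    split_ifs
    exacts [Commute.refl _, hsym_comm n _]

/-- If `Γ = ⟨S | R⟩` is a finitely presented sofic group with a generator `τ ∈ S`
that is a central nontrivial involution in `Γ`, then `Γ` has a sofic approximation
on sets of the form `Ω± = {±} × Ω` in which `τ` is always sent to the sign flip and
every permutation in the image commutes with the sign flip. -/
theorem stmt12 {S : Type} [DecidableEq S] (R : Finset (FreeGroup S)) (τ : S)
    (hτc : ∀ g : PresentedGroup (R : Set (FreeGroup S)),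
      Commute (PresentedGroup.of τ) g)
    (hτ2 : (PresentedGroup.of τ : PresentedGroup (R : Set (FreeGroup S))) ^ 2 = 1)
    (hτne : (PresentedGroup.of τ : PresentedGroup (R : Set (FreeGroup S))) ≠ 1)
    (hsofic : ∃ (m : ℕ → ℕ) (φ : ∀ n, S → Equiv.Perm (Fin (m n))),
      IsSoficApprox R φ) :
    ∃ (m : ℕ → ℕ) (ψ : ∀ n, S → Equiv.Perm (Bool × Fin (m n))),
      IsSoficApprox R ψ ∧ (∀ n, ψ n τ = negId (Fin (m n))) ∧
      ∀ n (s : S), Commute (ψ n s) (negId (Fin (m n))) := by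
  obtain ⟨m, φ, hφ⟩ := hsofic
  have hτ2N : FreeGroup.of τ ^ 2 ∈ Subgroup.normalClosure (R : Set (FreeGroup S)) :=
    PresentedGroup.mk_eq_one_iff.1 (by rwa [map_pow])
  have hτN : FreeGroup.of τ ∉ Subgroup.normalClosure (R : Set (FreeGroup S)) :=
    fun h => hτne (PresentedGroup.mk_eq_one_iff.2 h)
  have hcomm : ∀ s, ⁅FreeGroup.of s, FreeGroup.of τ⁆ ∈
      Subgroup.normalClosure (R : Set (FreeGroup S)) := fun s =>
    PresentedGroup.mk_eq_one_iff.1 <| by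
      rw [map_commutatorElement]
      exact commutatorElement_eq_one_iff_commute.2 (hτc _).symm
  choose e he using fun n => exists_conj_doubleHom_dHp_negId_le (φ n τ)
  have hχ := hφ.map (fun n => (MulAut.conj (e n)).toMonoidHom.comp (doubleHom _))
    fun n a => by
      rw [MonoidHom.comp_apply, MulEquiv.coe_toMonoidHom, MulAut.conj_apply, dHp_conj_one,
        dHp_doubleHom_one]
  refine ⟨m, IsSoficApprox.exists_eq_negId_of_tendsto hχ τ hcomm
    (squeeze_zero (fun n => dHp_nonneg _ _) he ?_)⟩
  have hsq := hφ.tendsto_of_mem_normalClosure hτ2N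
  have hsep := hφ.2 _ hτN
  simp only [FreeGroup.lift_apply_of, sq] at hsq hsep
  simpa using hsq.add (tendsto_const_nhds (x := (1 : ℝ)) |>.sub hsep)
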